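/- arXiv:1011.3487 — 2 statements merged into one kernel-verified Lean document; each statement's English description precedes it below -/
import Mathlib

section
/- For any prime p > 3, sum_{k=1}^{p-1} H_k^{(2)} ≡ 0 (mod p^2) and sum_{k=1}^{p-1} H_k^{(3)} ≡ 0 (mod p), where H_k^{(m)} = sum_{j=1}^k 1/j^m. -/
/-!
Swapping the order of summation, `∑_{k<p} H_k^{(m+1)} = p H_{p-1}^{(m+1)} - H_{p-1}^{(m)}`.
Modulo `p`, `H_{p-1}^{(m)}` is the power sum `∑ x^m` over `(ℤ/p)ˣ`, which vanishes unless
`p - 1 ∣ m`. Pairing `j` with `p - j` gives `2 H_{p-1} = p ∑ 1/(j(p-j)) ≡ -p H_{p-1}^{(2)}`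
modulo `p²`, which is Wolstenholme's `p² ∣ H_{p-1}`.
-/

open Finset Ring

theorem map_ringInverse {M₀ G₀ F : Type*} [MonoidWithZero M₀] [GroupWithZero G₀] [FunLike F M₀ G₀]
    [MonoidHomClass F M₀ G₀] (f : F) {x : M₀} (hx : IsUnit x) : f x⁻¹ʳ = (f x)⁻¹ :=
  eq_inv_of_mul_eq_one_right (by rw [← map_mul, mul_inverse_cancel x hx, map_one])

theorem Finset.sum_Icc_sum_Icc_eq_sum_nsmul {M : Type*} [AddCommMonoid M] (n : ℕ) (f : ℕ → M) :
    ∑ k ∈ Icc 1 n, ∑ j ∈ Icc 1 k, f j = ∑ j ∈ Icc 1 n, (n + 1 - j) • f j := by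
  rw [Finset.sum_comm' (t' := Icc 1 n) (s' := fun j => Icc j n)
    (by intro x y; simp only [mem_Icc]; omega)]
  exact Finset.sum_congr rfl (fun j _ => by rw [Finset.sum_const, Nat.card_Icc])

theorem sum_Icc_sum_Icc_pow_succ {R : Type*} [CommRing R] (n m : ℕ) (x : ℕ → R)
    (hx : ∀ j ∈ Icc 1 n, j * x j = 1) :
    ∑ k ∈ Icc 1 n, ∑ j ∈ Icc 1 k, x j ^ (m + 1)
      = (n + 1) * ∑ j ∈ Icc 1 n, x j ^ (m + 1) - ∑ j ∈ Icc 1 n, x j ^ m := by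
  rw [sum_Icc_sum_Icc_eq_sum_nsmul, mul_sum, ← sum_sub_distrib]
  refine sum_congr rfl fun j hj => ?_
  have hjn : j ≤ n + 1 := by simp only [mem_Icc] at hj; omega
  rw [nsmul_eq_mul, Nat.cast_sub hjn]
  push_cast
  linear_combination -(x j ^ m) * hx j hj

namespace ZMod

variable {p : ℕ} [Fact p.Prime]

theorem sum_Icc_inv_pow_eq_zero {m : ℕ} (hm : ¬(p - 1) ∣ m) :
    ∑ j ∈ Icc 1 (p - 1), ((j : ZMod p)⁻¹) ^ m = 0 := by
  have hp1 := (Fact.out : p.Prime).one_lt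
  calc ∑ j ∈ Icc 1 (p - 1), ((j : ZMod p)⁻¹) ^ m
      = ∑ u : (ZMod p)ˣ, ((u⁻¹ : (ZMod p)ˣ) : ZMod p) ^ m := by
        refine sum_bij' (fun j hj => Units.mk0 (j : ZMod p) ?_) (fun u _ => (u : ZMod p).val)
          (fun _ _ => mem_univ _) (fun u _ => ?_) (fun j hj => ?_) (fun u _ => ?_)
          (fun _ _ => by simp)
        · simp only [mem_Icc] at hj
          rw [Ne, natCast_eq_zero_iff]
          exact Nat.not_dvd_of_pos_of_lt (by omega) (by omega)
        · have := ZMod.val_lt (u : ZMod p)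
          have := (ZMod.val_ne_zero (u : ZMod p)).2 u.ne_zero
          simp only [mem_Icc]; omega
        · simp only [mem_Icc] at hj
          simp [val_cast_of_lt (show j < p by omega)]
        · exact Units.ext (natCast_zmod_val _)
    _ = ∑ u : (ZMod p)ˣ, (u : ZMod p) ^ m := Fintype.sum_equiv (Equiv.inv _) _ _ (fun _ => rfl)
    _ = 0 := by rw [FiniteField.sum_pow_units, ZMod.card, if_neg hm]

end ZMod

namespace PadicInt

variable {p : ℕ} [hp : Fact p.Prime]

theorem isUnit_natCast_of_lt {j : ℕ} (hj0 : j ≠ 0) (hjp : j < p) : IsUnit (j : ℤ_[p]) :=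
  isUnit_iff.2 (norm_natCast_eq_one_iff.2 (Nat.coprime_of_lt_prime hj0 hjp hp.out))

theorem p_dvd_iff_toZMod_eq_zero {x : ℤ_[p]} : (p : ℤ_[p]) ∣ x ↔ toZMod x = 0 := by
  rw [← Ideal.mem_span_singleton, ← maximalIdeal_eq_span_p, ← ker_toZMod, RingHom.mem_ker]

theorem norm_coe_le_pow_of_dvd {x : ℤ_[p]} {n : ℕ} (h : (p : ℤ_[p]) ^ n ∣ x) :
    ‖(x : ℚ_[p])‖ ≤ (p : ℝ) ^ (-n : ℤ) := by
  rwa [padic_norm_e_of_padicInt, norm_le_pow_iff_mem_span_pow, Ideal.mem_span_singleton]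

variable (p) in
/-- `H_{p-1}^{(m)}` as a `p`-adic integer. -/
noncomputable def harmonic (m : ℕ) : ℤ_[p] :=
  ∑ j ∈ Icc 1 (p - 1), (j : ℤ_[p])⁻¹ʳ ^ m

theorem isUnit_natCast_of_mem_Icc {j : ℕ} (hj : j ∈ Icc 1 (p - 1)) : IsUnit (j : ℤ_[p]) := by
  have := hp.out.one_lt
  simp only [mem_Icc] at hj
  exact isUnit_natCast_of_lt (by omega) (by omega)

theorem toZMod_harmonic (m : ℕ) :
    toZMod (harmonic p m) = ∑ j ∈ Icc 1 (p - 1), ((j : ZMod p)⁻¹) ^ m := by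
  simp only [harmonic, map_sum, map_pow]
  refine sum_congr rfl fun j hj => ?_
  rw [map_ringInverse toZMod (isUnit_natCast_of_mem_Icc hj), map_natCast]

theorem p_dvd_harmonic {m : ℕ} (hm : ¬(p - 1) ∣ m) : (p : ℤ_[p]) ∣ harmonic p m := by
  rw [p_dvd_iff_toZMod_eq_zero, toZMod_harmonic, ZMod.sum_Icc_inv_pow_eq_zero hm]

/-- Wolstenholme's theorem. -/
theorem sq_dvd_harmonic_one (h : 3 < p) : (p : ℤ_[p]) ^ 2 ∣ harmonic p 1 := by
  set u : ℕ → ℤ_[p] := fun j => (j : ℤ_[p])⁻¹ʳ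
  have hu : ∀ j ∈ Icc 1 (p - 1), j * u j = 1 := fun j hj =>
    mul_inverse_cancel _ (isUnit_natCast_of_mem_Icc hj)
  have hmem : ∀ j ∈ Icc 1 (p - 1), p - j ∈ Icc 1 (p - 1) := by
    intro j hj; simp only [mem_Icc] at hj ⊢; omega
  have hreflect : ∑ j ∈ Icc 1 (p - 1), u (p - j) = harmonic p 1 := by
    simp only [harmonic, pow_one]
    refine sum_nbij' (fun j => p - j) (fun j => p - j) hmem hmem ?_ ?_ (fun _ _ => rfl) <;>
      intro j hj <;> simp only [mem_Icc] at hj <;> omega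
  have hpair : ∀ j ∈ Icc 1 (p - 1), u j + u (p - j) = p * (u j * u (p - j)) := by
    intro j hj
    have hjp : ((p - j : ℕ) : ℤ_[p]) = p - j := by
      simp only [mem_Icc] at hj; rw [Nat.cast_sub (by omega)]
    linear_combination
      (-u (p - j)) * hu j hj - u j * hu (p - j) (hmem j hj) + u j * u (p - j) * hjp
  have htwo : 2 * harmonic p 1 = p * ∑ j ∈ Icc 1 (p - 1), u j * u (p - j) := by
    rw [mul_sum, ← sum_congr rfl hpair, sum_add_distrib, hreflect, two_mul]
    simp [harmonic, u]
  -- `1/(j(p-j)) ≡ -1/j^2 (mod p)`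
  have hcross : (p : ℤ_[p]) ∣ ∑ j ∈ Icc 1 (p - 1), u j * u (p - j) := by
    rw [p_dvd_iff_toZMod_eq_zero, map_sum]
    have : ¬(p - 1) ∣ 2 := Nat.not_dvd_of_pos_of_lt two_pos (by omega)
    rw [← neg_eq_zero, ← ZMod.sum_Icc_inv_pow_eq_zero this, ← sum_neg_distrib]
    refine sum_congr rfl fun j hj => ?_
    rw [map_mul, map_ringInverse toZMod (isUnit_natCast_of_mem_Icc hj),
      map_ringInverse toZMod (isUnit_natCast_of_mem_Icc (hmem j hj)), map_natCast, map_natCast,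
      Nat.cast_sub ((mem_Icc.1 hj).2.trans (Nat.sub_le p 1)), ZMod.natCast_self]
    ring
  have htwo_unit : IsUnit (2 : ℤ_[p]) := by
    exact_mod_cast isUnit_natCast_of_lt two_ne_zero (by omega)
  rw [← htwo_unit.dvd_mul_left, htwo, pow_two]
  exact mul_dvd_mul_left _ hcross

theorem sum_Icc_sum_Icc_inverse_pow_succ (m : ℕ) :
    ∑ k ∈ Icc 1 (p - 1), ∑ j ∈ Icc 1 k, (j : ℤ_[p])⁻¹ʳ ^ (m + 1)
      = p * harmonic p (m + 1) - harmonic p m := by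
  rw [sum_Icc_sum_Icc_pow_succ _ _ _
      fun j hj => mul_inverse_cancel _ (isUnit_natCast_of_mem_Icc hj),
    ← Nat.cast_add_one, Nat.sub_add_cancel hp.out.one_le]
  rfl

theorem ratCast_sum_sum_one_div_pow (m : ℕ) :
    ((∑ k ∈ Icc 1 (p - 1), ∑ j ∈ Icc 1 k, (1 : ℚ) / (j : ℚ) ^ (m + 1) : ℚ) : ℚ_[p])
      = ((p * harmonic p (m + 1) - harmonic p m : ℤ_[p]) : ℚ_[p]) := by
  rw [← sum_Icc_sum_Icc_inverse_pow_succ]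
  change _ = Coe.ringHom _
  push_cast [map_sum, map_pow]
  refine sum_congr rfl fun k hk => sum_congr rfl fun j hj => ?_
  have hj' : j ∈ Icc 1 (p - 1) := by simp only [mem_Icc] at hk hj ⊢; omega
  rw [map_ringInverse _ (isUnit_natCast_of_mem_Icc hj'), map_natCast, one_div, inv_pow]

end PadicInt

theorem stmt_12 (p : ℕ) [hp : Fact p.Prime] (h : 3 < p) :
    ‖((∑ k ∈ Finset.Icc 1 (p - 1), ∑ j ∈ Finset.Icc 1 k, (1 : ℚ) / (j : ℚ) ^ 2 : ℚ) : ℚ_[p])‖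
        ≤ (p : ℝ) ^ (-2 : ℤ) ∧
    ‖((∑ k ∈ Finset.Icc 1 (p - 1), ∑ j ∈ Finset.Icc 1 k, (1 : ℚ) / (j : ℚ) ^ 3 : ℚ) : ℚ_[p])‖
        ≤ (p : ℝ) ^ (-1 : ℤ) := by
  have hp_dvd : ∀ m, m < p - 1 → m ≠ 0 → (p : ℤ_[p]) ∣ PadicInt.harmonic p m := fun m hm hm0 =>
    PadicInt.p_dvd_harmonic (Nat.not_dvd_of_pos_of_lt (Nat.pos_of_ne_zero hm0) hm)
  constructor
  · rw [PadicInt.ratCast_sum_sum_one_div_pow 1]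
    refine PadicInt.norm_coe_le_pow_of_dvd (dvd_sub ?_ (PadicInt.sq_dvd_harmonic_one h))
    rw [pow_two]
    exact mul_dvd_mul_left _ (hp_dvd 2 (by omega) two_ne_zero)
  · rw [PadicInt.ratCast_sum_sum_one_div_pow 2]
    refine PadicInt.norm_coe_le_pow_of_dvd (n := 1) ?_
    rw [pow_one]
    exact dvd_sub (dvd_mul_right _ _) (hp_dvd 2 (by omega) two_ne_zero)
end

section
/- For any prime p > 3, sum_{k=1}^{p-1} sum_{1 ≤ i_1 < i_2 < i_3 < i_4 ≤ k} 1/(i_1 i_2 i_3 i_4) ≡ -1 (mod p). -/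
/-!
Write `e_j(s)` for the `j`-th elementary symmetric function of the reciprocals `1/i`, `i ∈ s`.
Peeling off the largest and the smallest index gives the hockey-stick identity
`∑_{k=1}^n e_{j+1}(1..k) = (n+1) e_{j+1}(2..n+1)`; with `n = p - 2` the sum over `k ≤ p - 1`
becomes `e_{j+1}(1..p-1) - e_{j+1}(2..p-1) = e_j(2..p-1)` modulo `p`.
The reciprocals modulo `p` run over all units, so `∏ (X + 1/i) = X^(p-1) - 1` over `ZMod p`
and `e_j(1..p-1) ≡ 0` for `0 < j < p - 1`; peeling off `i = 1` again gives
`e_j(2..p-1) ≡ (-1)^j`, which is `-1` for `j = 3`.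
The rational sum is a `p`-adic integer whose reduction modulo `p` is this sum, whence the bound.
-/

open Finset Polynomial

theorem sum_powersetCard_succ_insert_prod {α R : Type*} [DecidableEq α] [CommSemiring R]
    (f : α → R) {a : α} {s : Finset α} (ha : a ∉ s) (j : ℕ) :
    ∑ S ∈ (insert a s).powersetCard (j + 1), ∏ i ∈ S, f i =
      ∑ S ∈ s.powersetCard (j + 1), ∏ i ∈ S, f i + f a * ∑ S ∈ s.powersetCard j, ∏ i ∈ S, f i := by
  have notMem {S : Finset α} (hS : S ∈ s.powersetCard j) : a ∉ S :=
    fun haS => ha ((mem_powersetCard.mp hS).1 haS)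
  rw [powersetCard_succ_insert ha, sum_union, sum_image, mul_sum]
  · exact congrArg _ (sum_congr rfl fun S hS => prod_insert (notMem hS))
  · intro S hS T hT hST
    rw [← erase_insert (notMem hS), ← erase_insert (notMem hT), hST]
  · refine disjoint_left.mpr fun S hS hS' => ?_
    obtain ⟨T, -, rfl⟩ := mem_image.mp hS'
    exact ha ((mem_powersetCard.mp hS).1 (mem_insert_self a T))

theorem sum_Icc_sum_powersetCard_Icc_prod {R : Type*} [CommRing R] (f : ℕ → R) (j n : ℕ)
    (hf : ∀ m, 1 ≤ m → m ≤ n + 1 → (m : R) * f m = 1) :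
    ∑ k ∈ Icc 1 n, ∑ S ∈ (Icc 1 k).powersetCard (j + 1), ∏ i ∈ S, f i
      = (n + 1) * ∑ S ∈ (Icc 2 (n + 1)).powersetCard (j + 1), ∏ i ∈ S, f i := by
  induction n with
  | zero => simp [powersetCard_eq_empty.mpr (show #(∅ : Finset ℕ) < j + 1 by simp)]
  | succ n ih =>
    have hf1 : f 1 = 1 := by simpa using hf 1 le_rfl (by omega)
    have hfn : ((n : R) + 2) * f (n + 2) = 1 := by exact_mod_cast hf (n + 2) (by omega) le_rfl
    have hIcc1 : Icc 1 (n + 1) = insert 1 (Icc 2 (n + 1)) := by ext; simp; omega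
    have hIcc2 : Icc 2 (n + 2) = insert (n + 2) (Icc 2 (n + 1)) := by ext; simp; omega
    rw [sum_Icc_succ_top (by omega), ih fun m h1 h2 => hf m h1 (by omega), hIcc1, hIcc2,
      sum_powersetCard_succ_insert_prod f (by simp), sum_powersetCard_succ_insert_prod f (by simp),
      hf1]
    push_cast
    linear_combination (-∑ S ∈ (Icc 2 (n + 1)).powersetCard j, ∏ i ∈ S, f i) * hfn

theorem FiniteField.prod_univ_X_sub_C (K : Type*) [Field K] [Fintype K] :
    ∏ a : K, (X - C a) = X ^ Fintype.card K - X := by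
  have hdeg : 1 < Fintype.card K := Fintype.one_lt_card
  have hmonic : (X ^ Fintype.card K - X : K[X]).Monic :=
    monic_X_pow_sub (by rw [degree_X]; exact_mod_cast hdeg)
  have h := prod_multiset_X_sub_C_of_monic_of_roots_card_eq hmonic (by
    rw [roots_X_pow_card_sub_X, X_pow_card_sub_X_natDegree_eq K hdeg]; rfl)
  rwa [roots_X_pow_card_sub_X] at h

namespace ZMod

variable {p : ℕ} [hp : Fact p.Prime]

theorem cast_ne_zero_of_mem_Icc {i : ℕ} (hi : i ∈ Icc 1 (p - 1)) : (i : ZMod p) ≠ 0 := by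
  rw [Ne, natCast_eq_zero_iff]
  exact Nat.not_dvd_of_pos_of_lt (by grind) (by grind)

theorem prod_Icc_X_add_C_inv : ∏ i ∈ Icc 1 (p - 1), (X + C (i : ZMod p)⁻¹) = X ^ (p - 1) - 1 := by
  have hp1 : 1 ≤ p := hp.out.one_le
  have hreindex : ∏ i ∈ Icc 1 (p - 1), (X + C (i : ZMod p)⁻¹)
      = ∏ a ∈ univ.erase (0 : ZMod p), (X - C a) := by
    refine prod_nbij' (fun i => -(i : ZMod p)⁻¹) (fun a => (-a⁻¹).val) ?_ ?_ ?_ ?_ ?_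
    · intro i hi
      simpa using cast_ne_zero_of_mem_Icc hi
    · intro a ha
      have hval : (-a⁻¹).val ≠ 0 := by simpa using ne_of_mem_erase ha
      have := (-a⁻¹).val_lt
      simp only [mem_Icc]
      omega
    · intro i hi
      simpa using val_cast_of_lt (by grind : i < p)
    · intro a _
      simp
    · intro i _
      simp [sub_eq_add_neg]
  have hfactor : (X : (ZMod p)[X]) ^ p - X = X * (X ^ (p - 1) - 1) := by
    rw [mul_sub, mul_one, ← pow_succ', Nat.sub_add_cancel hp1]
  have h := FiniteField.prod_univ_X_sub_C (ZMod p)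
  rw [← mul_prod_erase univ _ (mem_univ 0), ZMod.card, hfactor, map_zero, sub_zero] at h
  rw [hreindex, mul_left_cancel₀ X_ne_zero h]

theorem sum_powersetCard_Icc_inv_eq_zero {j : ℕ} (hj₁ : 1 ≤ j) (hj : j ≤ p - 2) :
    ∑ S ∈ (Icc 1 (p - 1)).powersetCard j, ∏ i ∈ S, (i : ZMod p)⁻¹ = 0 := by
  have hcard : #(Icc 1 (p - 1)) = p - 1 := by simp
  have h := prod_X_add_C_coeff (Icc 1 (p - 1)) (fun i => (i : ZMod p)⁻¹)
    (k := p - 1 - j) (by omega)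
  rw [prod_Icc_X_add_C_inv, hcard, Nat.sub_sub_self (by omega)] at h
  rw [← h, coeff_sub, coeff_X_pow, coeff_one, if_neg (by omega), if_neg (by omega), sub_zero]

theorem sum_powersetCard_Icc_two_inv {j : ℕ} (hj : j ≤ p - 2) :
    ∑ S ∈ (Icc 2 (p - 1)).powersetCard j, ∏ i ∈ S, (i : ZMod p)⁻¹ = (-1) ^ j := by
  induction j with
  | zero => simp
  | succ j ih =>
    have hIcc : Icc 1 (p - 1) = insert 1 (Icc 2 (p - 1)) := by ext; simp; omega
    have h := sum_powersetCard_succ_insert_prod (fun i : ℕ => (i : ZMod p)⁻¹)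
      (a := 1) (s := Icc 2 (p - 1)) (by simp) j
    rw [← hIcc, sum_powersetCard_Icc_inv_eq_zero (by omega) hj, ih (by omega)] at h
    rw [pow_succ]
    linear_combination -h

theorem sum_Icc_sum_powersetCard_Icc_inv {j : ℕ} (hj : j ≤ p - 2) :
    ∑ k ∈ Icc 1 (p - 1), ∑ S ∈ (Icc 1 k).powersetCard (j + 1), ∏ i ∈ S, (i : ZMod p)⁻¹
      = (-1) ^ j := by
  obtain ⟨n, rfl⟩ := Nat.exists_eq_add_of_le' hp.out.two_le
  have hinv : ∀ m, 1 ≤ m → m ≤ n + 1 → (m : ZMod (n + 2)) * (m : ZMod (n + 2))⁻¹ = 1 :=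
    fun m h1 h2 => mul_inv_cancel₀ (cast_ne_zero_of_mem_Icc (mem_Icc.mpr ⟨h1, h2⟩))
  have hIcc : Icc 1 (n + 1) = insert 1 (Icc 2 (n + 1)) := by ext; simp; omega
  rw [show n + 2 - 1 = n + 1 by omega, sum_Icc_succ_top (by omega),
    sum_Icc_sum_powersetCard_Icc_prod _ j n hinv, hIcc,
    sum_powersetCard_succ_insert_prod _ (by simp)]
  have hchar : ((n : ZMod (n + 2)) + 2) = 0 := by exact_mod_cast natCast_self (n + 2)
  have htail := sum_powersetCard_Icc_two_inv hj
  rw [show n + 2 - 1 = n + 1 by omega] at htail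
  rw [Nat.cast_one, inv_one, one_mul]
  linear_combination htail +
    (∑ S ∈ (Icc 2 (n + 1)).powersetCard (j + 1), ∏ i ∈ S, (i : ZMod (n + 2))⁻¹) * hchar

end ZMod

theorem map_sum_Icc_sum_powersetCard_prod {R S : Type*} [CommSemiring R] [CommSemiring S]
    (φ : R →+* S) {f : ℕ → R} {g : ℕ → S} {n : ℕ} (h : ∀ i ∈ Icc 1 n, φ (f i) = g i) (j : ℕ) :
    φ (∑ k ∈ Icc 1 n, ∑ T ∈ (Icc 1 k).powersetCard j, ∏ i ∈ T, f i)
      = ∑ k ∈ Icc 1 n, ∑ T ∈ (Icc 1 k).powersetCard j, ∏ i ∈ T, g i := by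
  simp only [map_sum, map_prod]
  refine sum_congr rfl fun k hk => sum_congr rfl fun T hT => prod_congr rfl fun i hi => h i ?_
  have := (mem_powersetCard.mp hT).1 hi
  grind

namespace PadicInt

variable {p : ℕ} [Fact p.Prime]

theorem map_inv_natCast {K : Type*} [Field K] (φ : ℤ_[p] →+* K) {i : ℕ} (hi : p.Coprime i) :
    φ (i : ℤ_[p]).inv = (i : K)⁻¹ :=
  eq_inv_of_mul_eq_one_right <| by
    rw [← map_natCast φ, ← map_mul, mul_inv (norm_natCast_eq_one_iff.mpr hi), map_one]

theorem norm_le_inv_of_toZMod_eq_zero {x : ℤ_[p]} (hx : toZMod x = 0) :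
    ‖x‖ ≤ (p : ℝ) ^ (-1 : ℤ) := by
  have hmax : x ∈ IsLocalRing.maximalIdeal ℤ_[p] := ker_toZMod (p := p) ▸ RingHom.mem_ker.mpr hx
  have hlt : ‖x‖ < 1 := mem_nonunits.mp hmax
  simpa using (norm_lt_pow_iff_norm_le_pow_sub_one x 0).mp (by simpa using hlt)

end PadicInt

theorem stmt_15 (p : ℕ) [hp : Fact p.Prime] (h : 3 < p) :
    ‖((∑ k ∈ Finset.Icc 1 (p - 1),
          ∑ S ∈ Finset.powersetCard 4 (Finset.Icc 1 k), ∏ i ∈ S, (1 : ℚ) / i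
        - (-1) : ℚ) : ℚ_[p])‖
      ≤ (p : ℝ) ^ (-1 : ℤ) := by
  have hcop : ∀ i ∈ Icc 1 (p - 1), p.Coprime i := fun i hi =>
    hp.out.coprime_iff_not_dvd.mpr (Nat.not_dvd_of_pos_of_lt (by grind) (by grind))
  have hp5 : 5 ≤ p := hp.out.five_le_of_ne_two_of_ne_three (by omega) (by omega)
  set x : ℤ_[p] :=
    ∑ k ∈ Icc 1 (p - 1), ∑ S ∈ (Icc 1 k).powersetCard 4, ∏ i ∈ S, (i : ℤ_[p]).inv + 1
  have hx : PadicInt.toZMod x = 0 := by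
    rw [map_add, map_sum_Icc_sum_powersetCard_prod _
      (fun i hi => PadicInt.map_inv_natCast _ (hcop i hi)),
      ZMod.sum_Icc_sum_powersetCard_Icc_inv (p := p) (j := 3) (by omega)]
    norm_num
  have hnorm := PadicInt.norm_le_inv_of_toZMod_eq_zero hx
  rw [PadicInt.norm_def] at hnorm
  convert hnorm using 2
  change _ = PadicInt.Coe.ringHom x
  rw [map_add, map_sum_Icc_sum_powersetCard_prod _
    (fun i hi => PadicInt.map_inv_natCast _ (hcop i hi))]
  push_cast
  simp [one_div]
end
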